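/- Let 𝔇 ≥ 1 be an integer, p an odd prime not dividing 𝔇, and x, y, n integers. Then the number of quadruples (c₁, c₂, d₁, d₂) ∈ (ℤ/pℤ)⁴ satisfying A·x² + B·y² + C·x + D·y + E ≡ n (mod p) equals p³ − p if p ∤ n, and equals p³ + p(p − 1) if p | n. Here A = c₁² + 𝔇c₂², B = 𝔇A, C = 2(c₁d₁ + 𝔇c₂d₂), D = 2𝔇(c₁d₂ − c₂d₁), and E = A + d₁² + 𝔇d₂², all computed in ℤ/pℤ. -/

import Mathlib

/-- The number of quadruples `(c₁, c₂, d₁, d₂) ∈ (ℤ/pℤ)⁴` with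
`A x² + B y² + C x + D y + E = n` in `ℤ/pℤ`, where `A = c₁² + 𝔇c₂²`, `B = 𝔇A`,
`C = 2(c₁d₁ + 𝔇c₂d₂)`, `D = 2𝔇(c₁d₂ − c₂d₁)`, `E = A + d₁² + 𝔇d₂²`. -/
noncomputable def quadCount (𝔇 p : ℕ) (x y n : ℤ) : ℕ :=
  Nat.card {v : ZMod p × ZMod p × ZMod p × ZMod p //
    (v.1 ^ 2 + (𝔇 : ZMod p) * v.2.1 ^ 2) * (x : ZMod p) ^ 2
      + ((𝔇 : ZMod p) * (v.1 ^ 2 + (𝔇 : ZMod p) * v.2.1 ^ 2)) * (y : ZMod p) ^ 2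
      + (2 * (v.1 * v.2.2.1 + (𝔇 : ZMod p) * v.2.1 * v.2.2.2)) * (x : ZMod p)
      + (2 * (𝔇 : ZMod p) * (v.1 * v.2.2.2 - v.2.1 * v.2.2.1)) * (y : ZMod p)
      + ((v.1 ^ 2 + (𝔇 : ZMod p) * v.2.1 ^ 2) + v.2.2.1 ^ 2 + (𝔇 : ZMod p) * v.2.2.2 ^ 2)
      = (n : ZMod p)}

/-! Shifting `d` by `(c₁x − 𝔇c₂y, c₂x + c₁y)` completes the square: `Q` becomes `N(c) + N(d)` for the
norm form `N(a, b) = a² + 𝔇b²`, so one counts representations of `n` by `N ⊕ N`. With `χ` the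
quadratic character and `ε = χ(−𝔇)`, counting square roots reduces the number of representations of
`m` by `N` to a Jacobi sum, giving `p − ε + [m = 0] p ε`. Summing this over the fibres of the second
copy of `N` and using `ε² = 1` gives `p³ − p + [m = 0] p²`. -/

open Finset

lemma Nat.card_subtype_prod {α β : Type*} [Fintype α] [Fintype β] (P : α → β → Prop)
    [∀ a b, Decidable (P a b)] :
    Nat.card {v : α × β // P v.1 v.2} = ∑ b, Nat.card {a // P a b} := by
  simp only [Nat.card_eq_fintype_card, Fintype.card_subtype, card_filter,
    Fintype.sum_prod_type_right]

section FiniteField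

variable {F : Type*} [Field F] [Fintype F] [DecidableEq F]

lemma natCard_sq_eq (hF : ringChar F ≠ 2) (a : F) :
    (Nat.card {x : F // x ^ 2 = a} : ℤ) = quadraticChar F a + 1 := by
  rw [← quadraticChar_card_sqrts hF a, Nat.card_eq_fintype_card, Fintype.card_subtype,
    Set.toFinset_ofPred]

lemma sum_comp_sq (hF : ringChar F ≠ 2) (f : F → ℤ) :
    ∑ b, f (b ^ 2) = ∑ t, (quadraticChar F t + 1) * f t := by
  rw [← sum_fiberwise' univ (· ^ 2) f]
  refine sum_congr rfl fun t _ => ?_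
  rw [sum_const, nsmul_eq_mul, ← natCard_sq_eq hF t, Nat.card_eq_fintype_card,
    Fintype.card_subtype]

lemma sum_quadraticChar_sub_mul (hF : ringChar F ≠ 2) {D : F} (hD : D ≠ 0) (m : F) :
    ∑ t, quadraticChar F (m - D * t) = 0 := by
  rw [← quadraticChar_sum_zero hF]
  exact Equiv.sum_comp ((Equiv.mulLeft₀ D hD).trans (Equiv.subLeft m)) _

lemma sum_quadraticChar_mul_self :
    ∑ t : F, quadraticChar F t * quadraticChar F t = Fintype.card F - 1 := by
  have h := MulChar.sum_one_eq_card_units (R := F) (R' := ℤ)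
  rw [← (quadraticChar_isQuadratic F).sq_eq_one, Fintype.card_units,
    Nat.cast_pred Fintype.card_pos] at h
  simpa [sq, MulChar.coeToFun_mul] using h

lemma jacobiSum_quadraticChar (hF : ringChar F ≠ 2) :
    jacobiSum (quadraticChar F) (quadraticChar F) = -quadraticChar F (-1) := by
  have h := jacobiSum_nontrivial_inv (quadraticChar_ne_one hF)
  rwa [(quadraticChar_isQuadratic F).inv] at h

lemma sum_quadraticChar_mul_quadraticChar_sub (hF : ringChar F ≠ 2) {D : F} (hD : D ≠ 0)
    (m : F) : ∑ t, quadraticChar F t * quadraticChar F (m - D * t) =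
      if m = 0 then (Fintype.card F - 1) * quadraticChar F (-D) else -quadraticChar F (-D) := by
  split_ifs with hm
  · simp_rw [hm, zero_sub, ← neg_mul, map_mul]
    rw [← sum_quadraticChar_mul_self, sum_mul]
    exact sum_congr rfl fun t _ => by ring
  · -- substituting `t = (m / D) s` turns the sum into `χ(m² / D) J(χ, χ)`
    have hsubst := Equiv.sum_comp (Equiv.mulLeft₀ (m / D) (div_ne_zero hm hD))
      fun t => quadraticChar F t * quadraticChar F (m - D * t)
    have hsq : quadraticChar F (m / D * m) = quadraticChar F D := by
      rw [show m / D * m = D * (m / D) ^ 2 by field_simp, map_mul,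
        quadraticChar_sq_one' (div_ne_zero hm hD), mul_one]
    rw [← hsubst]
    calc ∑ s, quadraticChar F (m / D * s) * quadraticChar F (m - D * (m / D * s))
        = ∑ s, quadraticChar F (m / D * m) * (quadraticChar F s * quadraticChar F (1 - s)) := by
          refine sum_congr rfl fun s _ => ?_
          rw [show m - D * (m / D * s) = m * (1 - s) by field_simp, map_mul, map_mul, map_mul]
          ring
      _ = -quadraticChar F (-D) := by
          rw [← mul_sum, ← jacobiSum, jacobiSum_quadraticChar hF, hsq, neg_eq_neg_one_mul D,
            map_mul]
          ring

def normForm {R : Type*} [CommRing R] (D : R) (w : R × R) : R := w.1 ^ 2 + D * w.2 ^ 2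

lemma natCard_normForm_eq (hF : ringChar F ≠ 2) {D : F} (hD : D ≠ 0) (m : F) :
    (Nat.card {w // normForm D w = m} : ℤ) = Fintype.card F - quadraticChar F (-D)
      + if m = 0 then Fintype.card F * quadraticChar F (-D) else 0 := by
  have hfiber (b : F) : (Nat.card {a // a ^ 2 + D * b ^ 2 = m} : ℤ) =
      quadraticChar F (m - D * b ^ 2) + 1 := by
    simp_rw [← natCard_sq_eq hF, ← eq_sub_iff_add_eq]
  calc (Nat.card {w // normForm D w = m} : ℤ)
      = ∑ b, (quadraticChar F (m - D * b ^ 2) + 1) := by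
        simp only [normForm, Nat.card_subtype_prod fun a b => a ^ 2 + D * b ^ 2 = m,
          Nat.cast_sum, hfiber]
    _ = ∑ t, (quadraticChar F t + 1) * (quadraticChar F (m - D * t) + 1) :=
        sum_comp_sq hF fun t => quadraticChar F (m - D * t) + 1
    _ = ∑ t, quadraticChar F t * quadraticChar F (m - D * t) + ∑ t, quadraticChar F t
          + ∑ t, quadraticChar F (m - D * t) + Fintype.card F := by
        simp only [add_mul, mul_add, mul_one, one_mul, sum_add_distrib, sum_const, card_univ,
          nsmul_one]
        ring
    _ = _ := by
      rw [sum_quadraticChar_mul_quadraticChar_sub hF hD, quadraticChar_sum_zero hF,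
        sum_quadraticChar_sub_mul hF hD]
      split_ifs <;> ring

lemma natCard_normForm_add_normForm_eq (hF : ringChar F ≠ 2) {D : F} (hD : D ≠ 0) (m : F) :
    (Nat.card {v : (F × F) × (F × F) // normForm D v.1 + normForm D v.2 = m} : ℤ) =
      (Fintype.card F : ℤ) ^ 3 - Fintype.card F
        + if m = 0 then (Fintype.card F : ℤ) ^ 2 else 0 := by
  set q : ℤ := (Fintype.card F : ℤ)
  set ε := quadraticChar F (-D)
  have hε : ε * ε = 1 := by rw [← sq]; exact quadraticChar_sq_one (neg_ne_zero.mpr hD)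
  have hfiber (w : F × F) : (Nat.card {u // normForm D u + normForm D w = m} : ℤ) =
      q - ε + if normForm D w = m then q * ε else 0 := by
    simp_rw [← eq_sub_iff_add_eq, natCard_normForm_eq hF hD, sub_eq_zero, eq_comm (a := m)]
    rfl
  calc (Nat.card {v : (F × F) × (F × F) // normForm D v.1 + normForm D v.2 = m} : ℤ)
      = ∑ w : F × F, (q - ε + if normForm D w = m then q * ε else 0) := by
        simp only [Nat.card_subtype_prod fun u w => normForm D u + normForm D w = m,
          Nat.cast_sum, hfiber]
    _ = q ^ 2 * (q - ε) + Nat.card {w // normForm D w = m} * (q * ε) := by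
        rw [sum_add_distrib, sum_const, sum_ite, sum_const, sum_const_zero, card_univ,
          Fintype.card_prod, Nat.card_eq_fintype_card, Fintype.card_subtype]
        simp only [nsmul_eq_mul, Nat.cast_mul, q]
        ring
    _ = _ := by
      rw [natCard_normForm_eq hF hD]
      split_ifs
      · linear_combination (q ^ 2 - q) * hε
      · linear_combination -q * hε

end FiniteField

section Shear

variable {R : Type*} [CommRing R]

lemma shiftedForm_eq_normForm_add_normForm (D X Y c₁ c₂ d₁ d₂ : R) :
    (c₁ ^ 2 + D * c₂ ^ 2) * X ^ 2 + (D * (c₁ ^ 2 + D * c₂ ^ 2)) * Y ^ 2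
      + (2 * (c₁ * d₁ + D * c₂ * d₂)) * X + (2 * D * (c₁ * d₂ - c₂ * d₁)) * Y
      + ((c₁ ^ 2 + D * c₂ ^ 2) + d₁ ^ 2 + D * d₂ ^ 2)
      = normForm D (c₁, c₂)
        + normForm D (d₁ + (c₁ * X - D * c₂ * Y), d₂ + (c₂ * X + c₁ * Y)) := by
  simp only [normForm]
  ring

def normShear (D X Y : R) : R × R × R × R ≃ (R × R) × (R × R) :=
  (Equiv.prodAssoc R R (R × R)).symm.trans <| Equiv.prodShear (Equiv.refl _) fun c =>
    Equiv.addRight (c.1 * X - D * c.2 * Y, c.2 * X + c.1 * Y)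

end Shear

lemma quadCount_eq_natCard_normForm_add_normForm (𝔇 p : ℕ) (x y n : ℤ) :
    quadCount 𝔇 p x y n =
      Nat.card {v : (ZMod p × ZMod p) × (ZMod p × ZMod p) //
        normForm (𝔇 : ZMod p) v.1 + normForm (𝔇 : ZMod p) v.2 = n} :=
  Nat.card_congr <| (normShear _ _ _).subtypeEquiv fun ⟨c₁, c₂, d₁, d₂⟩ => by
    rw [shiftedForm_eq_normForm_add_normForm]
    rfl

theorem quadCount_values_general (𝔇 : ℕ) (p : ℕ) (hp : p.Prime) (hodd : Odd p)
    (hpD : ¬ p ∣ 𝔇) (x y n : ℤ) :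
    (¬ ((p : ℤ) ∣ n) → quadCount 𝔇 p x y n = p ^ 3 - p) ∧
    (((p : ℤ) ∣ n) → quadCount 𝔇 p x y n = p ^ 3 + p * (p - 1)) := by
  have := Fact.mk hp
  have hF : ringChar (ZMod p) ≠ 2 := by
    rw [ZMod.ringChar_zmod_n]
    rintro rfl
    exact Nat.not_odd_iff_even.mpr even_two hodd
  have hD : (𝔇 : ZMod p) ≠ 0 := mt (ZMod.natCast_eq_zero_iff _ _).mp hpD
  have hcount := natCard_normForm_add_normForm_eq hF hD (n : ZMod p)
  rw [← quadCount_eq_natCard_normForm_add_normForm 𝔇 p x y n, ZMod.card] at hcount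
  have hp3 : p ≤ p ^ 3 := Nat.le_self_pow (by norm_num) p
  refine ⟨fun hn => ?_, fun hn => ?_⟩
  · rw [if_neg (mt (ZMod.intCast_zmod_eq_zero_iff_dvd n p).mp hn)] at hcount
    zify [hp3]
    linear_combination hcount
  · rw [if_pos ((ZMod.intCast_zmod_eq_zero_iff_dvd n p).mpr hn)] at hcount
    zify [hp.one_le]
    linear_combination hcount

/-- For `𝔇 ≥ 1`, `p` an odd prime not dividing `𝔇` and integers `x, y, n`, the number of
quadruples `(c₁, c₂, d₁, d₂) ∈ (ℤ/pℤ)⁴` with `Q(x,y) ≡ n (mod p)` equals `p³ − p` when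
`p ∤ n` and `p³ + p(p−1)` when `p ∣ n`. -/
theorem quadCount_values (𝔇 : ℕ) (h𝔇 : 1 ≤ 𝔇) (p : ℕ) (hp : p.Prime) (hodd : Odd p)
    (hpD : ¬ p ∣ 𝔇) (x y n : ℤ) :
    (¬ ((p : ℤ) ∣ n) → quadCount 𝔇 p x y n = p ^ 3 - p) ∧
    (((p : ℤ) ∣ n) → quadCount 𝔇 p x y n = p ^ 3 + p * (p - 1)) :=
  quadCount_values_general 𝔇 p hp hodd hpD x y n
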